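/- Discrete Noether theorem for SE(3) (3D): assume the 3D cell Lagrangian L satisfies L(Rx₁+c, …, Rx₁₆+c) = L(x₁, …, x₁₆) for every rotation matrix R ∈ SO(3), every c ∈ ℝ³, and all (x₁,…,x₁₆) ∈ (ℝ³)¹⁶. If the discrete field φ satisfies the 3D discrete Euler–Lagrange node equations at every node (j,a,b,c) with 0 < j < N, then for all 0 ≤ j ≤ N−2: 𝐉_l^{j+1} = 𝐉_l^j and 𝐉_r^{j+1} = 𝐉_r^j, where 𝐉_l^j := Σ_{cells □^j at time level j} Σ_{p ∈ {2,4,…,16}} D_pL(j¹φ(□^j)) ∈ ℝ³ and 𝐉_r^j := Σ_{cells □^j at time level j} Σ_{p ∈ {2,4,…,16}} x_p × D_pL(j¹φ(□^j)) ∈ ℝ³, with x_p the p-th slot entry of j¹φ(□^j) and × the cross product on ℝ³. -/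

import Mathlib

noncomputable section

/-- The space `ℝ³` as a Euclidean space. -/
abbrev E3 : Type := EuclideanSpace ℝ (Fin 3)

/-- Partial gradient `D_pL ∈ ℝ³` of a cell Lagrangian `L` in its `p`-th slot. -/
noncomputable def pgrad3 {k : ℕ} (L : (Fin k → E3) → ℝ) (x : Fin k → E3) (p : Fin k) : E3 :=
  gradient (fun y => L (Function.update x p y)) (x p)

/-- Cross product on `ℝ³`. -/
def cross3 (u v : E3) : E3 :=
  WithLp.toLp 2 ![u 1 * v 2 - u 2 * v 1, u 2 * v 0 - u 0 * v 2, u 0 * v 1 - u 1 * v 0]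

/-- `a`-offsets of the 16 slots of a 3D cell (slots `0,…,15` correspond to the paper's
slots `1,…,16`; slot `2m` is the time-`j` value and slot `2m+1` the time-`j+1` value at
the `m`-th spatial node `(a,b,c), (a+1,b,c), (a,b+1,c), (a,b,c+1), (a+1,b+1,c),
(a,b+1,c+1), (a+1,b,c+1), (a+1,b+1,c+1)`). -/
def offA : Fin 16 → ℕ := ![0,0,1,1,0,0,0,0,1,1,0,0,1,1,1,1]
/-- `b`-offsets of the 16 slots of a 3D cell. -/
def offB : Fin 16 → ℕ := ![0,0,0,0,1,1,0,0,1,1,1,1,0,0,1,1]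
/-- `c`-offsets of the 16 slots of a 3D cell. -/
def offC : Fin 16 → ℕ := ![0,0,0,0,0,0,1,1,0,0,1,1,1,1,1,1]

/-- The node of the 3D cell `□^j_{a,b,c}` occupied by slot `s`. -/
def cellNode3 (j a b c : ℕ) (s : Fin 16) : ℕ × ℕ × ℕ × ℕ :=
  (j + s.val % 2, a + offA s, b + offB s, c + offC s)

/-- First jet of the discrete field on the 3D cell `□^j_{a,b,c}`. -/
def jet3 (φ : ℕ → ℕ → ℕ → ℕ → E3) (j a b c : ℕ) : Fin 16 → E3 :=
  fun s => φ (j + s.val % 2) (a + offA s) (b + offB s) (c + offC s)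

/-- Sum of `D_pL(j¹φ(□))` over all pairs `(□, p)` such that the given node is incident
to the 3D cell `□` in slot `p`. -/
noncomputable def delSum3 (N A B C : ℕ) (L : (Fin 16 → E3) → ℝ)
    (φ : ℕ → ℕ → ℕ → ℕ → E3) (nd : ℕ × ℕ × ℕ × ℕ) : E3 :=
  ∑ j' ∈ Finset.range N, ∑ a' ∈ Finset.range A, ∑ b' ∈ Finset.range B,
    ∑ c' ∈ Finset.range C, ∑ s : Fin 16,
      if cellNode3 j' a' b' c' s = nd then pgrad3 L (jet3 φ j' a' b' c') s else 0

/-- The even paper slots `2, 4, …, 16` (odd slots `1, 3, …, 15` here), carrying the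
time-`(j+1)` values. -/
def evenSlot (m : Fin 8) : Fin 16 := ⟨2 * m.val + 1, by omega⟩

/-- Total discrete linear momentum at time level `j` (3D). -/
noncomputable def Jlin3 (A B C : ℕ) (L : (Fin 16 → E3) → ℝ)
    (φ : ℕ → ℕ → ℕ → ℕ → E3) (j : ℕ) : E3 :=
  ∑ a ∈ Finset.range A, ∑ b ∈ Finset.range B, ∑ c ∈ Finset.range C,
    ∑ m : Fin 8, pgrad3 L (jet3 φ j a b c) (evenSlot m)

/-- Total discrete angular momentum at time level `j` (3D). -/
noncomputable def Jang3 (A B C : ℕ) (L : (Fin 16 → E3) → ℝ)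
    (φ : ℕ → ℕ → ℕ → ℕ → E3) (j : ℕ) : E3 :=
  ∑ a ∈ Finset.range A, ∑ b ∈ Finset.range B, ∑ c ∈ Finset.range C,
    ∑ m : Fin 8,
      cross3 (jet3 φ j a b c (evenSlot m)) (pgrad3 L (jet3 φ j a b c) (evenSlot m))

/-!
Differentiating the invariance of `L` along the curves `t ↦ x + t • c` and `t ↦ exp (t Ω) x`
(`Ω` skew-symmetric, so `exp (t Ω) ∈ SO(3)`) at `t = 0` gives, on every cell, the identities
`∑_p D_pL = 0` and `∑_p x_p × D_pL = 0`. Summing the Euler–Lagrange equations over all nodes at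
time level `j + 1` collects the time-`j` slots of the cells at level `j + 1` together with the
time-`(j + 1)` slots of the cells at level `j`; by the cell identity at level `j + 1` the former
equal minus the time-`(j + 1)` slots of the same cells, whence `J^{j+1} = J^j`. For the angular
momentum each node equation is first crossed with the value of `φ` at that node, which is the
entry `x_p` in every slot incident to it.
-/

open Finset NormedSpace
open scoped Matrix

theorem fderiv_apply_eq_zero_of_forall_comp_eq {F : Type*} [NormedAddCommGroup F]
    [NormedSpace ℝ F] {L : F → ℝ} {γ : ℝ → F} {x v : F} (hL : DifferentiableAt ℝ L x)
    (hγ : HasDerivAt γ v 0) (hγ0 : γ 0 = x) (hconst : ∀ t, L (γ t) = L x) :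
    fderiv ℝ L x v = 0 := by
  subst hγ0
  have h := hL.hasFDerivAt.comp_hasDerivAt 0 hγ
  rw [show L ∘ γ = fun _ => L (γ 0) from funext hconst] at h
  exact h.unique (hasDerivAt_const _ _)

theorem exp_mem_specialOrthogonalGroup {n : Type*} [Fintype n] [DecidableEq n]
    {Ω : Matrix n n ℝ} (hΩ : Ωᵀ = -Ω) : exp Ω ∈ Matrix.specialOrthogonalGroup n ℝ := by
  have horth : exp Ω ∈ Matrix.orthogonalGroup n ℝ := by
    rw [Matrix.mem_orthogonalGroup_iff', ← Matrix.exp_transpose, hΩ,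
      ← Matrix.exp_add_of_commute _ _ (Commute.refl Ω).neg_left, neg_add_cancel, exp_zero]
  have hdet_sq : (exp Ω).det * (exp Ω).det = 1 := by
    simpa using (Matrix.det_of_mem_unitary horth).1
  -- `exp Ω` is the square of `exp (Ω / 2)`, so its determinant `±1` is `1`.
  have hdet_nonneg : 0 ≤ (exp Ω).det := by
    have : exp Ω = exp ((1 / 2 : ℝ) • Ω) * exp ((1 / 2 : ℝ) • Ω) := by
      rw [← Matrix.exp_add_of_commute _ _ (Commute.refl _), ← add_smul]; norm_num
    rw [this, Matrix.det_mul]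
    exact mul_self_nonneg _
  exact Matrix.mem_specialOrthogonalGroup_iff.mpr ⟨horth, by nlinarith⟩

def crossMatrix (ω : E3) : Matrix (Fin 3) (Fin 3) ℝ :=
  !![0, -ω 2, ω 1; ω 2, 0, -ω 0; -ω 1, ω 0, 0]

theorem crossMatrix_transpose (ω : E3) : (crossMatrix ω)ᵀ = -crossMatrix ω := by
  ext i j; fin_cases i <;> fin_cases j <;> simp [crossMatrix]

theorem toEuclideanLin_crossMatrix (ω u : E3) :
    Matrix.toEuclideanLin (crossMatrix ω) u = cross3 ω u := by
  ext i; fin_cases i <;> simp [crossMatrix, cross3, Matrix.toLpLin_apply,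
    dotProduct, Fin.sum_univ_three] <;> ring

theorem inner_cross3_cyclic (u v w : E3) :
    inner ℝ u (cross3 v w) = inner ℝ v (cross3 w u) := by
  simp [cross3, PiLp.inner_apply, Fin.sum_univ_three]; ring

section MatrixNorm

attribute [local instance] Matrix.linftyOpNormedRing Matrix.linftyOpNormedAlgebra

theorem hasDerivAt_toEuclideanLin_exp_smul (Ω : Matrix (Fin 3) (Fin 3) ℝ) (v : E3) :
    HasDerivAt (fun t : ℝ => Matrix.toEuclideanLin (exp (t • Ω)) v)
      (Matrix.toEuclideanLin Ω v) 0 := by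
  have hexp := hasDerivAt_exp_smul_const' (𝕂 := ℝ) Ω 0
  rw [zero_smul, exp_zero, mul_one] at hexp
  exact (LinearMap.applyₗ v ∘ₗ Matrix.toEuclideanLin.toLinearMap).toContinuousLinearMap
    |>.hasFDerivAt.comp_hasDerivAt 0 hexp

end MatrixNorm

section PartialGradient

variable {k : ℕ} {L : (Fin k → E3) → ℝ} {x : Fin k → E3}

theorem inner_pgrad3 (hL : DifferentiableAt ℝ L x) (p : Fin k) (w : E3) :
    inner ℝ (pgrad3 L x p) w = fderiv ℝ L x (Pi.single p w) := by
  have hL' : DifferentiableAt ℝ L (Function.update x p (x p)) := by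
    rwa [Function.update_eq_self]
  have h : HasFDerivAt (fun y => L (Function.update x p y)) _ (x p) :=
    hL'.hasFDerivAt.comp (x p) (hasFDerivAt_update (𝕜 := ℝ) x (x p))
  rw [pgrad3, ← InnerProductSpace.toDual_apply_apply, toDual_gradient, h.fderiv,
    Function.update_eq_self]
  refine congrArg (fderiv ℝ L x) (funext fun q => ?_)
  rcases eq_or_ne q p with rfl | hqp <;> simp [*]

theorem fderiv_apply_eq_sum_inner_pgrad3 (hL : DifferentiableAt ℝ L x) (v : Fin k → E3) :
    fderiv ℝ L x v = ∑ p, inner ℝ (pgrad3 L x p) (v p) := by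
  simp_rw [inner_pgrad3 hL, ← map_sum, univ_sum_single]

theorem sum_pgrad3_eq_zero (hL : DifferentiableAt ℝ L x)
    (hinv : ∀ c : E3, L (fun p => x p + c) = L x) :
    ∑ p, pgrad3 L x p = 0 := by
  set g := ∑ p, pgrad3 L x p
  have hγ : HasDerivAt (fun t : ℝ => fun p => x p + t • g) (fun _ => g) 0 :=
    hasDerivAt_pi.mpr fun p => by
      simpa using ((hasDerivAt_id (0 : ℝ)).smul_const g).const_add (x p)
  have h := fderiv_apply_eq_zero_of_forall_comp_eq hL hγ (by simp) fun t => hinv (t • g)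
  rw [fderiv_apply_eq_sum_inner_pgrad3 hL, ← sum_inner] at h
  exact inner_self_eq_zero.mp h

theorem sum_cross3_pgrad3_eq_zero (hL : DifferentiableAt ℝ L x)
    (hinv : ∀ R : Matrix.specialOrthogonalGroup (Fin 3) ℝ,
      L (fun p => Matrix.toEuclideanLin (R : Matrix (Fin 3) (Fin 3) ℝ) (x p)) = L x) :
    ∑ p, cross3 (x p) (pgrad3 L x p) = 0 := by
  set g := ∑ p, cross3 (x p) (pgrad3 L x p)
  have hskew : ∀ t : ℝ, (t • crossMatrix g)ᵀ = -(t • crossMatrix g) := fun t => by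
    rw [Matrix.transpose_smul, crossMatrix_transpose, smul_neg]
  have hγ : HasDerivAt (fun t : ℝ => fun p => Matrix.toEuclideanLin (exp (t • crossMatrix g)) (x p))
      (fun p => Matrix.toEuclideanLin (crossMatrix g) (x p)) 0 :=
    hasDerivAt_pi.mpr fun p => hasDerivAt_toEuclideanLin_exp_smul _ (x p)
  have h := fderiv_apply_eq_zero_of_forall_comp_eq hL hγ (by simp) fun t =>
    hinv ⟨_, exp_mem_specialOrthogonalGroup (hskew t)⟩
  rw [fderiv_apply_eq_sum_inner_pgrad3 hL] at h
  simp_rw [toEuclideanLin_crossMatrix] at h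
  rw [sum_congr rfl fun p _ => inner_cross3_cyclic _ _ _, ← inner_sum] at h
  exact inner_self_eq_zero.mp h

end PartialGradient

-- The paper's odd slots `1, 3, …, 15`, carrying the time-`j` values.
def oddSlot (m : Fin 8) : Fin 16 := ⟨2 * m.val, by omega⟩

theorem offA_le_one (s : Fin 16) : offA s ≤ 1 := by revert s; decide
theorem offB_le_one (s : Fin 16) : offB s ≤ 1 := by revert s; decide
theorem offC_le_one (s : Fin 16) : offC s ≤ 1 := by revert s; decide

theorem jet3_eq_of_cellNode3_eq {φ : ℕ → ℕ → ℕ → ℕ → E3} {j a b c t a₀ b₀ c₀ : ℕ} {s : Fin 16}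
    (h : cellNode3 j a b c s = (t, a₀, b₀, c₀)) : jet3 φ j a b c s = φ t a₀ b₀ c₀ := by
  simp only [cellNode3, Prod.mk.injEq] at h
  obtain ⟨rfl, rfl, rfl, rfl⟩ := h
  rfl

section CellSums

variable {M : Type*} [AddCommGroup M]

theorem sum_fin16_eq_oddSlot_add_evenSlot (f : Fin 16 → M) :
    ∑ s, f s = ∑ m, f (oddSlot m) + ∑ m, f (evenSlot m) := by
  rw [← (finProdFinEquiv : Fin 8 × Fin 2 ≃ Fin 16).sum_comp, Fintype.sum_prod_type,
    ← sum_add_distrib]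
  refine sum_congr rfl fun m _ => ?_
  rw [Fin.sum_univ_two]
  congr 2 <;> ext <;> simp [finProdFinEquiv, oddSlot, evenSlot, add_comm]

theorem sum_fin16_ite_level (f : Fin 16 → M) (j t : ℕ) :
    (∑ s : Fin 16, if j + s.val % 2 = t then f s else 0)
      = (if j = t then ∑ m, f (oddSlot m) else 0)
        + (if j + 1 = t then ∑ m, f (evenSlot m) else 0) := by
  rw [sum_fin16_eq_oddSlot_add_evenSlot]
  simp [oddSlot, evenSlot, Nat.add_mod, sum_ite_irrel]

variable (N A B C : ℕ) (H : ℕ → ℕ → ℕ → ℕ → Fin 16 → M)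

def incidenceSum (nd : ℕ × ℕ × ℕ × ℕ) : M :=
  ∑ j' ∈ range N, ∑ a' ∈ range A, ∑ b' ∈ range B, ∑ c' ∈ range C, ∑ s : Fin 16,
    if cellNode3 j' a' b' c' s = nd then H j' a' b' c' s else 0

def slotSum (σ : Fin 8 → Fin 16) (j : ℕ) : M :=
  ∑ a ∈ range A, ∑ b ∈ range B, ∑ c ∈ range C, ∑ m : Fin 8, H j a b c (σ m)

theorem sum_box_ite_cellNode3 {a' b' c' : ℕ} (ha : a' < A) (hb : b' < B) (hc : c' < C)
    (j t : ℕ) (s : Fin 16) (v : M) :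
    (∑ a ∈ range (A + 1), ∑ b ∈ range (B + 1), ∑ c ∈ range (C + 1),
      if cellNode3 j a' b' c' s = (t, a, b, c) then v else 0)
      = if j + s.val % 2 = t then v else 0 := by
  have := offA_le_one s
  have := offB_le_one s
  have := offC_le_one s
  simp only [cellNode3, Prod.mk.injEq, ite_and, sum_ite_irrel, sum_const_zero, sum_ite_eq,
    mem_range]
  split_ifs <;> first | rfl | omega

theorem sum_box_incidenceSum (t : ℕ) :
    ∑ a ∈ range (A + 1), ∑ b ∈ range (B + 1), ∑ c ∈ range (C + 1),
      incidenceSum N A B C H (t, a, b, c)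
      = ∑ j' ∈ range N, ∑ a' ∈ range A, ∑ b' ∈ range B, ∑ c' ∈ range C, ∑ s : Fin 16,
          if j' + s.val % 2 = t then H j' a' b' c' s else 0 := by
  simp only [incidenceSum]
  -- each `sum_comm` pass moves one node coordinate to the innermost position
  simp only [sum_comm (s := range (A + 1))]
  simp only [sum_comm (s := range (B + 1))]
  simp only [sum_comm (s := range (C + 1))]
  refine sum_congr rfl fun j' _ => sum_congr rfl fun a' ha => sum_congr rfl fun b' hb =>
    sum_congr rfl fun c' hc => sum_congr rfl fun s _ => ?_
  exact sum_box_ite_cellNode3 A B C (mem_range.mp ha) (mem_range.mp hb) (mem_range.mp hc) _ _ _ _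

theorem sum_cells_ite_level_succ {j : ℕ} (hj : j + 2 ≤ N) :
    ∑ j' ∈ range N, ∑ a' ∈ range A, ∑ b' ∈ range B, ∑ c' ∈ range C, ∑ s : Fin 16,
        (if j' + s.val % 2 = j + 1 then H j' a' b' c' s else 0)
      = slotSum A B C H oddSlot (j + 1) + slotSum A B C H evenSlot j := by
  simp only [sum_fin16_ite_level, sum_add_distrib, sum_ite_irrel, sum_const_zero,
    add_left_inj, sum_ite_eq', mem_range, slotSum]
  rw [if_pos (by omega), if_pos (by omega)]

theorem slotSum_oddSlot_add_slotSum_evenSlot (j : ℕ) :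
    slotSum A B C H oddSlot j + slotSum A B C H evenSlot j
      = ∑ a ∈ range A, ∑ b ∈ range B, ∑ c ∈ range C, ∑ s : Fin 16, H j a b c s := by
  simp only [slotSum, ← sum_add_distrib, sum_fin16_eq_oddSlot_add_evenSlot]

theorem slotSum_evenSlot_succ {j : ℕ} (hj : j + 2 ≤ N)
    (hcell : ∀ a b c, ∑ s : Fin 16, H (j + 1) a b c s = 0)
    (hnode : ∀ a b c, a ≤ A → b ≤ B → c ≤ C → incidenceSum N A B C H (j + 1, a, b, c) = 0) :
    slotSum A B C H evenSlot (j + 1) = slotSum A B C H evenSlot j := by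
  have hcells : slotSum A B C H oddSlot (j + 1) + slotSum A B C H evenSlot (j + 1) = 0 := by
    simp [slotSum_oddSlot_add_slotSum_evenSlot, hcell]
  have hnodes : slotSum A B C H oddSlot (j + 1) + slotSum A B C H evenSlot j = 0 := by
    rw [← sum_cells_ite_level_succ N A B C H hj, ← sum_box_incidenceSum]
    refine sum_eq_zero fun a ha => sum_eq_zero fun b hb => sum_eq_zero fun c hc => ?_
    simp only [mem_range] at ha hb hc
    exact hnode a b c (by omega) (by omega) (by omega)
  exact add_left_cancel (hcells.trans hnodes.symm)

end CellSums

def cross3ₗ (u : E3) : E3 →ₗ[ℝ] E3 :=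
  (WithLp.linearEquiv 2 ℝ (Fin 3 → ℝ)).symm.toLinearMap ∘ₗ crossProduct (WithLp.ofLp u) ∘ₗ
    (WithLp.linearEquiv 2 ℝ (Fin 3 → ℝ)).toLinearMap

theorem cross3ₗ_apply (u v : E3) : cross3ₗ u v = cross3 u v := rfl

theorem incidenceSum_cross3_jet3 (N A B C : ℕ) (φ : ℕ → ℕ → ℕ → ℕ → E3)
    (G : ℕ → ℕ → ℕ → ℕ → Fin 16 → E3) (t a b c : ℕ) :
    incidenceSum N A B C (fun j' a' b' c' s => cross3 (jet3 φ j' a' b' c' s) (G j' a' b' c' s))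
        (t, a, b, c)
      = cross3 (φ t a b c) (incidenceSum N A B C G (t, a, b, c)) := by
  have hterm : ∀ j' a' b' c' s, (if cellNode3 j' a' b' c' s = (t, a, b, c)
      then cross3 (jet3 φ j' a' b' c' s) (G j' a' b' c' s) else 0)
      = cross3ₗ (φ t a b c) (if cellNode3 j' a' b' c' s = (t, a, b, c)
        then G j' a' b' c' s else 0) := by
    intro j' a' b' c' s
    split_ifs with h
    · rw [jet3_eq_of_cellNode3_eq h, cross3ₗ_apply]
    · rw [map_zero]
  rw [← cross3ₗ_apply]
  simp only [incidenceSum, map_sum, hterm]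

theorem delSum3_eq_incidenceSum (N A B C : ℕ) (L : (Fin 16 → E3) → ℝ)
    (φ : ℕ → ℕ → ℕ → ℕ → E3) :
    delSum3 N A B C L φ = incidenceSum N A B C fun j a b c => pgrad3 L (jet3 φ j a b c) := rfl

theorem Jlin3_eq_slotSum (A B C : ℕ) (L : (Fin 16 → E3) → ℝ) (φ : ℕ → ℕ → ℕ → ℕ → E3) :
    Jlin3 A B C L φ = slotSum A B C (fun j a b c => pgrad3 L (jet3 φ j a b c)) evenSlot := rfl

theorem Jang3_eq_slotSum (A B C : ℕ) (L : (Fin 16 → E3) → ℝ) (φ : ℕ → ℕ → ℕ → ℕ → E3) :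
    Jang3 A B C L φ = slotSum A B C
      (fun j a b c s => cross3 (jet3 φ j a b c s) (pgrad3 L (jet3 φ j a b c) s)) evenSlot := rfl

theorem discrete_noether_SE3_3D_general
    (N A B C : ℕ)
    (L : (Fin 16 → E3) → ℝ) (hL : Differentiable ℝ L)
    (hinv : ∀ (R : Matrix.specialOrthogonalGroup (Fin 3) ℝ) (cc : E3) (x : Fin 16 → E3),
      L (fun p => Matrix.toEuclideanLin (R : Matrix (Fin 3) (Fin 3) ℝ) (x p) + cc) = L x)
    (φ : ℕ → ℕ → ℕ → ℕ → E3)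
    (hDEL : ∀ j a b c : ℕ, 0 < j → j < N → a ≤ A → b ≤ B → c ≤ C →
      delSum3 N A B C L φ (j, a, b, c) = 0) :
    ∀ j : ℕ, j + 2 ≤ N →
      Jlin3 A B C L φ (j + 1) = Jlin3 A B C L φ j
        ∧ Jang3 A B C L φ (j + 1) = Jang3 A B C L φ j := by
  rw [delSum3_eq_incidenceSum] at hDEL
  intro j hj
  have hnode : ∀ a b c, a ≤ A → b ≤ B → c ≤ C →
      incidenceSum N A B C (fun j a b c => pgrad3 L (jet3 φ j a b c)) (j + 1, a, b, c) = 0 :=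
    fun a b c => hDEL (j + 1) a b c j.succ_pos (by omega)
  rw [Jlin3_eq_slotSum, Jang3_eq_slotSum]
  constructor
  · refine slotSum_evenSlot_succ N A B C _ hj (fun a b c => ?_) hnode
    exact sum_pgrad3_eq_zero (hL _) fun cc => by simpa using hinv 1 cc (jet3 φ (j + 1) a b c)
  · refine slotSum_evenSlot_succ N A B C _ hj (fun a b c => ?_) fun a b c ha hb hc => ?_
    · exact sum_cross3_pgrad3_eq_zero (hL _) fun R => by simpa using hinv R 0 (jet3 φ (j + 1) a b c)
    · rw [incidenceSum_cross3_jet3, hnode a b c ha hb hc, ← cross3ₗ_apply, map_zero]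

/-- **Discrete Noether theorem for SE(3) (3D)**: if the 3D cell Lagrangian is invariant
under every rotation `R ∈ SO(3)` and every translation `c ∈ ℝ³` acting simultaneously on
all its slots, and `φ` satisfies the 3D discrete Euler–Lagrange node equations at every
node with `0 < j < N`, then the total discrete linear and angular momenta are conserved. -/
theorem discrete_noether_SE3_3D
    (N A B C : ℕ) (hN : 1 ≤ N) (hA : 1 ≤ A) (hB : 1 ≤ B) (hC : 1 ≤ C)
    (L : (Fin 16 → E3) → ℝ) (hL : Differentiable ℝ L)
    (hinv : ∀ (R : Matrix.specialOrthogonalGroup (Fin 3) ℝ) (cc : E3) (x : Fin 16 → E3),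
      L (fun p => Matrix.toEuclideanLin (R : Matrix (Fin 3) (Fin 3) ℝ) (x p) + cc) = L x)
    (φ : ℕ → ℕ → ℕ → ℕ → E3)
    (hDEL : ∀ j a b c : ℕ, 0 < j → j < N → a ≤ A → b ≤ B → c ≤ C →
      delSum3 N A B C L φ (j, a, b, c) = 0) :
    ∀ j : ℕ, j + 2 ≤ N →
      Jlin3 A B C L φ (j + 1) = Jlin3 A B C L φ j
        ∧ Jang3 A B C L φ (j + 1) = Jang3 A B C L φ j :=
  discrete_noether_SE3_3D_general N A B C L hL hinv φ hDEL
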